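/- arXiv:1309.3983 — 5 statements merged into one kernel-verified Lean document; each statement's English description precedes it below -/
import Mathlib

section
/- Let X be a topological space, let f₀, f₁, f₂, … : X → ℝ be continuous functions converging pointwise to a function f : X → ℝ, and let U ⊆ ℝ be open. Then f⁻¹(U) is an Fσ set: there exists a sequence of closed sets F₀, F₁, F₂, … ⊆ X with f⁻¹(U) = ⋃_{k ∈ ℕ} F_k. -/
/-!
Cover `U` by countably many closed sets `K i ⊆ U` whose interiors still cover `U`
(in a metric space, the sets where the distance to `Uᶜ` is at least `1 / i`). Then `f x ∈ U`
exactly when, for some `i`, all but finitely many `F m x` lie in `K i`: forwards because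
`f x ∈ interior (K i)`, backwards because `K i` is closed. For fixed `i` and `N`, the set of `x`
with `F m x ∈ K i` for all `m ≥ N` is closed by continuity of the `F m`.
-/

open Set Filter Topology

theorem preimage_eq_iUnion_iInter_of_tendsto {X Y ι : Type*} [TopologicalSpace Y]
    {f : X → Y} {F : ℕ → X → Y} (hconv : ∀ x, Tendsto (fun m => F m x) atTop (𝓝 (f x)))
    {U : Set Y} {K : ι → Set Y} (hK : ∀ i, IsClosed (K i)) (hKU : ∀ i, K i ⊆ U)
    (hUK : U ⊆ ⋃ i, interior (K i)) :
    f ⁻¹' U = ⋃ (i) (N : ℕ), ⋂ m ≥ N, F m ⁻¹' K i := by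
  ext x
  simp only [mem_preimage, mem_iUnion, mem_iInter]
  constructor
  · intro hx
    obtain ⟨i, hi⟩ := mem_iUnion.1 (hUK hx)
    obtain ⟨N, hN⟩ := eventually_atTop.1 ((hconv x).eventually (isOpen_interior.mem_nhds hi))
    exact ⟨i, N, fun m hm => interior_subset (hN m hm)⟩
  · rintro ⟨i, N, hN⟩
    exact hKU i ((hK i).mem_of_tendsto (hconv x) (eventually_atTop.2 ⟨N, hN⟩))

theorem IsOpen.exists_isClosed_subset_iUnion_interior {Y : Type*} [PseudoEMetricSpace Y]
    {U : Set Y} (hU : IsOpen U) :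
    ∃ K : ℕ → Set Y, (∀ n, IsClosed (K n)) ∧ (∀ n, K n ⊆ U) ∧ U ⊆ ⋃ n, interior (K n) := by
  -- `infEDist` rather than `infDist`: it is `⊤`, not `0`, when `U` is the whole space.
  let d : Y → ENNReal := fun y => Metric.infEDist y Uᶜ
  have hd : Continuous d := Metric.continuous_infEDist
  refine ⟨fun n => {y | (n : ENNReal)⁻¹ ≤ d y}, fun n => isClosed_le continuous_const hd,
    fun n y hy => ?_, fun y hy => ?_⟩
  · by_contra hyU
    have hdy : d y = 0 := Metric.infEDist_zero_of_mem hyU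
    exact (ENNReal.inv_pos.2 (ENNReal.natCast_ne_top n)).not_ge (hdy ▸ hy)
  · have hdy : d y ≠ 0 := by
      rw [← pos_iff_ne_zero, Metric.infEDist_pos_iff_notMem_closure, hU.isClosed_compl.closure_eq]
      exact not_not.2 hy
    obtain ⟨n, hn⟩ := ENNReal.exists_inv_nat_lt hdy
    exact mem_iUnion.2 ⟨n, interior_maximal (fun _ => le_of_lt)
      (isOpen_lt continuous_const hd) hn⟩

theorem stmt_4 {X : Type*} [TopologicalSpace X] (f : X → ℝ) (F : ℕ → X → ℝ)
    (hcont : ∀ m, Continuous (F m))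
    (hconv : ∀ x : X, Tendsto (fun m => F m x) atTop (𝓝 (f x)))
    (U : Set ℝ) (hU : IsOpen U) :
    ∃ C : ℕ → Set X, (∀ k, IsClosed (C k)) ∧ f ⁻¹' U = ⋃ k, C k := by
  obtain ⟨K, hK, hKU, hUK⟩ := hU.exists_isClosed_subset_iUnion_interior
  refine ⟨fun k => ⋂ m ≥ k.unpair.2, F m ⁻¹' K k.unpair.1, fun k => ?_, ?_⟩
  · exact isClosed_biInter fun m _ => (hK _).preimage (hcont m)
  · rw [iUnion_unpair (fun i N => ⋂ m ≥ N, F m ⁻¹' K i)]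
    exact preimage_eq_iUnion_iInter_of_tendsto hconv hK hKU hUK
end

section
/- (Baire) Let f₀, f₁, f₂, … : ℝ → ℝ be continuous functions converging pointwise to a function f : ℝ → ℝ. Then the set of points at which f is discontinuous, {x ∈ ℝ : f is not continuous at x}, is meager. -/
/-!
Fix `ε > 0` and `δ = ε / 3`. The closed sets `A N` on which the tail `(F n)_{n ≥ N}` stays within
`δ` of itself cover the space, and on `A N` the limit `f` is within `δ` of `F N`. Off the meagre
set `⋃ N, frontier (A N)` every point lies in the interior of some `A N`, where continuity of
`F N` makes the oscillation of `f` less than `3 δ = ε`. Intersecting over `ε = 1 / (k + 1)`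
gives continuity of `f` on a residual set.
-/

open Filter Topology

lemma IsClosed.isMeagre_frontier {X : Type*} [TopologicalSpace X] {s : Set X} (hs : IsClosed s) :
    IsMeagre (frontier s) :=
  (isClosed_frontier.isNowhereDense_iff.mpr (interior_frontier hs)).isMeagre

section TailOscillation

variable {X Y : Type*} [PseudoMetricSpace Y] {F : ℕ → X → Y}

def tailOscLE (F : ℕ → X → Y) (N : ℕ) (δ : ℝ) : Set X :=
  {x | ∀ m ≥ N, ∀ n ≥ N, dist (F m x) (F n x) ≤ δ}

lemma isClosed_tailOscLE [TopologicalSpace X] (hF : ∀ n, Continuous (F n)) (N : ℕ) (δ : ℝ) :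
    IsClosed (tailOscLE F N δ) := by
  simp only [tailOscLE, Set.ofPred_forall]
  exact isClosed_iInter fun m => isClosed_iInter fun _ => isClosed_iInter fun n =>
    isClosed_iInter fun _ => isClosed_le ((hF m).dist (hF n)) continuous_const

lemma exists_mem_tailOscLE {x : X} {y : Y} (hx : Tendsto (F · x) atTop (𝓝 y)) {δ : ℝ}
    (hδ : 0 < δ) : ∃ N, x ∈ tailOscLE F N δ := by
  obtain ⟨N, hN⟩ := Metric.cauchySeq_iff.mp hx.cauchySeq δ hδ
  exact ⟨N, fun m hm n hn => (hN m hm n hn).le⟩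

lemma dist_le_of_mem_tailOscLE {x : X} {y : Y} (hx : Tendsto (F · x) atTop (𝓝 y)) {N : ℕ}
    {δ : ℝ} (hN : x ∈ tailOscLE F N δ) : dist y (F N x) ≤ δ :=
  le_of_tendsto (hx.dist tendsto_const_nhds)
    (eventually_atTop.mpr ⟨N, fun m hm => hN m hm N le_rfl⟩)

variable [TopologicalSpace X] {f : X → Y}

lemma eventually_dist_lt_of_mem_interior_tailOscLE (hF : ∀ n, Continuous (F n))
    (hf : ∀ x, Tendsto (F · x) atTop (𝓝 (f x))) {x : X} {N : ℕ} {δ : ℝ} (hδ : 0 < δ)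
    (hx : x ∈ interior (tailOscLE F N δ)) : ∀ᶠ y in 𝓝 x, dist (f y) (f x) < 3 * δ := by
  have hfx := dist_le_of_mem_tailOscLE (hf x) (interior_subset hx)
  filter_upwards [mem_interior_iff_mem_nhds.mp hx,
    Metric.continuousAt_iff'.mp (hF N).continuousAt δ hδ] with y hyN hFy
  have hfy := dist_le_of_mem_tailOscLE (hf y) hyN
  calc dist (f y) (f x) ≤ dist (f y) (F N y) + dist (F N y) (F N x) + dist (F N x) (f x) :=
        dist_triangle4 _ _ _ _
    _ < 3 * δ := by rw [dist_comm (F N x)]; linarith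

lemma eventually_residual_eventually_dist_lt (hF : ∀ n, Continuous (F n))
    (hf : ∀ x, Tendsto (F · x) atTop (𝓝 (f x))) {ε : ℝ} (hε : 0 < ε) :
    ∀ᶠ x in residual X, ∀ᶠ y in 𝓝 x, dist (f y) (f x) < ε := by
  have hδ : 0 < ε / 3 := by positivity
  have hthree : 3 * (ε / 3) = ε := by ring
  have hfrontier : ∀ᶠ x in residual X, ∀ N, x ∉ frontier (tailOscLE F N (ε / 3)) :=
    eventually_countable_forall.mpr fun N => (isClosed_tailOscLE hF N _).isMeagre_frontier
  filter_upwards [hfrontier] with x hx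
  obtain ⟨N, hN⟩ := exists_mem_tailOscLE (hf x) hδ
  have hint := (mem_interior_iff_notMem_frontier hN).mpr (hx N)
  simpa only [hthree] using eventually_dist_lt_of_mem_interior_tailOscLE hF hf hδ hint

theorem eventually_residual_continuousAt_of_tendsto (hF : ∀ n, Continuous (F n))
    (hf : ∀ x, Tendsto (F · x) atTop (𝓝 (f x))) : ∀ᶠ x in residual X, ContinuousAt f x := by
  have hk : ∀ᶠ x in residual X, ∀ k : ℕ, ∀ᶠ y in 𝓝 x, dist (f y) (f x) < 1 / (k + 1) :=
    eventually_countable_forall.mpr fun k =>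
      eventually_residual_eventually_dist_lt hF hf Nat.one_div_pos_of_nat
  filter_upwards [hk] with x hx
  refine Metric.continuousAt_iff'.mpr fun ε hε => ?_
  obtain ⟨k, hkε⟩ := exists_nat_one_div_lt hε
  exact (hx k).mono fun y hy => hy.trans hkε

end TailOscillation

theorem stmt_6 (f : ℝ → ℝ) (F : ℕ → ℝ → ℝ)
    (hcont : ∀ n, Continuous (F n))
    (hconv : ∀ x : ℝ, Tendsto (fun n => F n x) atTop (𝓝 (f x))) :
    IsMeagre {x : ℝ | ¬ ContinuousAt f x} := by
  simp only [IsMeagre, Set.compl_ofPred, not_not]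
  exact eventually_residual_continuousAt_of_tendsto hcont hconv
end

section
/- Let f : ℝ → ℝ be differentiable (everywhere). Then the set of points at which the derivative f′ is discontinuous, {x ∈ ℝ : f′ is not continuous at x}, is meager. -/
/-!
The derivative is the pointwise limit of the continuous difference quotients
`n (f (x + 1/n) - f x)`. For a pointwise limit `g` of continuous functions `F n` and `ε > 0`, the
closed sets on which `F` is `ε/3`-Cauchy from index `N` on cover the space, so by Baire their
interiors have dense union; on the interior of one of them `g` stays within `ε/3` of the
continuous `F N`, hence oscillates by at most `ε`. Intersecting over `ε = 1/(k+1)` gives a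
residual set of continuity points of `g`.
-/

open Filter Topology Metric Set

section PointwiseLimit

variable {X Y : Type*} [PseudoMetricSpace Y] {F : ℕ → X → Y} {g : X → Y}

def cauchyFrom (F : ℕ → X → Y) (N : ℕ) (ε : ℝ) : Set X :=
  {x | ∀ m ≥ N, ∀ n ≥ N, dist (F m x) (F n x) ≤ ε}

lemma isClosed_cauchyFrom [TopologicalSpace X] (hF : ∀ n, Continuous (F n)) (N : ℕ) (ε : ℝ) :
    IsClosed (cauchyFrom F N ε) := by
  simp only [cauchyFrom, ofPred_forall]
  exact isClosed_biInter fun m _ => isClosed_biInter fun n _ =>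
    isClosed_le ((hF m).dist (hF n)) continuous_const

lemma iUnion_cauchyFrom (hg : ∀ x, Tendsto (F · x) atTop (𝓝 (g x))) {ε : ℝ} (hε : 0 < ε) :
    ⋃ N, cauchyFrom F N ε = univ := by
  refine eq_univ_of_forall fun x => mem_iUnion.2 ?_
  obtain ⟨N, hN⟩ := Metric.cauchySeq_iff.1 (hg x).cauchySeq ε hε
  exact ⟨N, fun m hm n hn => (hN m hm n hn).le⟩

lemma dist_le_of_mem_cauchyFrom (hg : ∀ x, Tendsto (F · x) atTop (𝓝 (g x))) {N : ℕ} {ε : ℝ}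
    {x : X} (hx : x ∈ cauchyFrom F N ε) : dist (g x) (F N x) ≤ ε :=
  le_of_tendsto ((hg x).dist tendsto_const_nhds)
    (eventually_atTop.2 ⟨N, fun m hm => hx m hm N le_rfl⟩)

variable [TopologicalSpace X]

lemma eventually_dist_le_of_mem_interior_cauchyFrom (hF : ∀ n, Continuous (F n))
    (hg : ∀ x, Tendsto (F · x) atTop (𝓝 (g x))) {N : ℕ} {ε : ℝ} (hε : 0 < ε) {x : X}
    (hx : x ∈ interior (cauchyFrom F N ε)) : ∀ᶠ y in 𝓝 x, dist (g y) (g x) ≤ 3 * ε := by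
  have hgx := dist_le_of_mem_cauchyFrom hg (interior_subset hx)
  filter_upwards [mem_interior_iff_mem_nhds.1 hx,
    (hF N).continuousAt.eventually (closedBall_mem_nhds (F N x) hε)] with y hy hFy
  calc dist (g y) (g x) ≤ dist (g y) (F N y) + dist (F N y) (F N x) + dist (F N x) (g x) :=
        dist_triangle4 _ _ _ _
    _ ≤ ε + ε + ε :=
        add_le_add_three (dist_le_of_mem_cauchyFrom hg hy) hFy (by rwa [dist_comm])
    _ = 3 * ε := by ring

lemma eventually_dist_le_mem_residual [BaireSpace X] (hF : ∀ n, Continuous (F n))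
    (hg : ∀ x, Tendsto (F · x) atTop (𝓝 (g x))) {ε : ℝ} (hε : 0 < ε) :
    {x | ∀ᶠ y in 𝓝 x, dist (g y) (g x) ≤ ε} ∈ residual X := by
  have hε3 : 0 < ε / 3 := by positivity
  refine mem_of_superset (residual_of_dense_open (isOpen_iUnion fun N => isOpen_interior)
    (dense_iUnion_interior_of_closed (isClosed_cauchyFrom hF · _) (iUnion_cauchyFrom hg hε3)))
    fun x hx => ?_
  obtain ⟨N, hN⟩ := mem_iUnion.1 hx
  simpa [mul_div_cancel₀] using eventually_dist_le_of_mem_interior_cauchyFrom hF hg hε3 hN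

lemma setOf_continuousAt_mem_residual_of_tendsto [BaireSpace X] (hF : ∀ n, Continuous (F n))
    (hg : ∀ x, Tendsto (F · x) atTop (𝓝 (g x))) : {x | ContinuousAt g x} ∈ residual X := by
  have h : ∀ᶠ x in residual X, ∀ k : ℕ, ∀ᶠ y in 𝓝 x, dist (g y) (g x) ≤ 1 / (k + 1) :=
    eventually_countable_forall.2 fun k =>
      eventually_dist_le_mem_residual hF hg (by positivity)
  filter_upwards [h] with x hx
  refine Metric.tendsto_nhds.2 fun ε hε => ?_
  obtain ⟨k, hk⟩ := exists_nat_one_div_lt hε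
  exact (hx k).mono fun y hy => hy.trans_lt hk

theorem isMeagre_setOf_not_continuousAt_of_tendsto [BaireSpace X] (hF : ∀ n, Continuous (F n))
    (hg : ∀ x, Tendsto (F · x) atTop (𝓝 (g x))) : IsMeagre {x | ¬ContinuousAt g x} := by
  simpa [IsMeagre, compl_ofPred] using setOf_continuousAt_mem_residual_of_tendsto hF hg

end PointwiseLimit

theorem HasDerivAt.tendsto_nat_smul_sub {E : Type*} [NormedAddCommGroup E] [NormedSpace ℝ E]
    {f : ℝ → E} {f' : E} {x : ℝ} (hf : HasDerivAt f f' x) :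
    Tendsto (fun n : ℕ => ((n : ℝ) + 1) • (f (x + ((n : ℝ) + 1)⁻¹) - f x)) atTop (𝓝 f') := by
  have hstep : Tendsto (fun n : ℕ => x + ((n : ℝ) + 1)⁻¹) atTop (𝓝[≠] x) := by
    refine tendsto_nhdsWithin_iff.2 ⟨?_, Eventually.of_forall fun n => ?_⟩
    · simpa using (tendsto_one_div_add_atTop_nhds_zero_nat (𝕜 := ℝ)).const_add x
    · simp only [mem_compl_iff, mem_singleton_iff, add_eq_left]
      positivity
  refine (hasDerivAt_iff_tendsto_slope.1 hf |>.comp hstep).congr fun n => ?_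
  simp [slope_def_module]

theorem stmt_8 (f : ℝ → ℝ) (hf : Differentiable ℝ f) :
    IsMeagre {x : ℝ | ¬ ContinuousAt (deriv f) x} :=
  isMeagre_setOf_not_continuousAt_of_tendsto
    (fun n => by have := hf.continuous; fun_prop) fun x => (hf x).hasDerivAt.tendsto_nat_smul_sub
end

section
/- For every closed set V ⊆ ℝ there exists a differentiable function f : ℝ → ℝ such that the derivative f′ is discontinuous at every point of V \ interior(V) (that is, at every point of the frontier of V). -/
/-!
Adding `ℤ` to `V` does not change its interior, so frontier points of `V` are frontier points
of `W = V ∪ ℤ`, and every complementary interval of `W` is a bounded gap `(a, b)`. Let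
`d(y) = (y - a)(b - y)/(b - a)` on such a gap and `d = 0` on `W`; then `f = d² sin (1/d)` is
differentiable, with `f' = 0` on `W` since `d(y) ≤ |y - x|` for every `x ∈ W`. Where
`d = (2πk)⁻¹` we get `f' = -d'`, and `d' → ±1` at the ends of a gap, so `|f'| ≥ 1/2`
at points arbitrarily close to every gap endpoint. A frontier point of `W` is a limit of gap
endpoints, so `f'` is discontinuous there.
-/

open Set Real

noncomputable def sqMulSinInv (t : ℝ) : ℝ := t ^ 2 * sin t⁻¹

lemma abs_sqMulSinInv_le (t : ℝ) : |sqMulSinInv t| ≤ t ^ 2 := by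
  rw [sqMulSinInv, abs_mul, abs_pow, sq_abs]
  exact mul_le_of_le_one_right (sq_nonneg t) (abs_sin_le_one _)

lemma hasDerivAt_sqMulSinInv {t : ℝ} (ht : t ≠ 0) :
    HasDerivAt sqMulSinInv (2 * t * sin t⁻¹ - cos t⁻¹) t := by
  refine ((hasDerivAt_pow 2 t).mul
    ((hasDerivAt_sin t⁻¹).comp t (hasDerivAt_inv ht))).congr_deriv ?_
  simp only [Function.comp]
  field_simp
  ring

lemma exists_pos_lt_two_mul_sin_inv_sub_cos_inv_eq {ε : ℝ} (hε : 0 < ε) :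
    ∃ t, 0 < t ∧ t < ε ∧ 2 * t * sin t⁻¹ - cos t⁻¹ = -1 := by
  obtain ⟨k, hk⟩ := exists_nat_gt (ε⁻¹ / (2 * π))
  have hk' : ε⁻¹ < k * (2 * π) := by rwa [div_lt_iff₀ (by positivity)] at hk
  have hpos : 0 < (k : ℝ) * (2 * π) := (inv_pos.2 hε).trans hk'
  refine ⟨(k * (2 * π))⁻¹, inv_pos.2 hpos, (inv_lt_comm₀ hpos hε).2 hk', ?_⟩
  have hsin : sin (k * (2 * π)) = 0 := by simpa using sin_add_nat_mul_two_pi 0 k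
  rw [inv_inv, hsin, cos_nat_mul_two_pi]
  ring

lemma hasDerivAt_zero_of_abs_le_sq {f : ℝ → ℝ} {x : ℝ} (hf : ∀ y, |f y| ≤ (y - x) ^ 2) :
    HasDerivAt f 0 x := by
  have hfx : f x = 0 := by simpa using hf x
  refine .of_isLittleO ?_
  simp only [hfx, sub_zero, smul_zero]
  refine Asymptotics.IsBigO.trans_isLittleO ?_ (Asymptotics.isLittleO_pow_sub_sub x one_lt_two)
  exact Asymptotics.isBigO_of_le _ fun y => by simpa using hf y

noncomputable def parabola (a b y : ℝ) : ℝ := (y - a) * (b - y) / (b - a)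

section Parabola

variable {a b y : ℝ}

lemma hasDerivAt_parabola (a b y : ℝ) :
    HasDerivAt (parabola a b) ((a + b - 2 * y) / (b - a)) y := by
  refine ((((hasDerivAt_id y).sub_const a).mul
    ((hasDerivAt_id y).const_sub b)).div_const (b - a)).congr_deriv ?_
  simp only [id]
  ring

lemma continuous_parabola (a b : ℝ) : Continuous (parabola a b) := by
  unfold parabola
  fun_prop

lemma parabola_pos (hy : y ∈ Ioo a b) : 0 < parabola a b y :=
  div_pos (mul_pos (sub_pos.2 hy.1) (sub_pos.2 hy.2)) (sub_pos.2 (hy.1.trans hy.2))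

lemma parabola_nonneg (hay : a ≤ y) (hyb : y ≤ b) : 0 ≤ parabola a b y :=
  div_nonneg (mul_nonneg (sub_nonneg.2 hay) (sub_nonneg.2 hyb)) (sub_nonneg.2 (hay.trans hyb))

lemma parabola_le_sub_left (hay : a ≤ y) (hyb : y ≤ b) : parabola a b y ≤ y - a := by
  rw [parabola, mul_div_assoc]
  exact mul_le_of_le_one_right (sub_nonneg.2 hay) (div_le_one_of_le₀ (by linarith) (by linarith))

lemma parabola_le_sub_right (hay : a ≤ y) (hyb : y ≤ b) : parabola a b y ≤ b - y := by
  rw [parabola, mul_comm, mul_div_assoc]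
  exact mul_le_of_le_one_right (sub_nonneg.2 hyb) (div_le_one_of_le₀ (by linarith) (by linarith))

lemma parabola_endpoint {e : ℝ} (he : e = a ∨ e = b) : parabola a b e = 0 := by
  rcases he with rfl | rfl <;> simp [parabola]

lemma exists_parabola_near_endpoint {e ε : ℝ} (hab : a < b) (he : e = a ∨ e = b)
    (hε : 0 < ε) :
    ∃ z ∈ Ioo a b, |z - e| < ε ∧
      2 * parabola a b z * sin (parabola a b z)⁻¹ - cos (parabola a b z)⁻¹ = -1 ∧
      1 / 2 ≤ |(a + b - 2 * z) / (b - a)| := by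
  set δ := min (ε / 2) ((b - a) / 4)
  have hδε : δ < ε := (min_le_left _ _).trans_lt (half_lt_self hε)
  have hδab : δ ≤ (b - a) / 4 := min_le_right _ _
  have hδ : 0 < δ := lt_min (half_pos hε) (by linarith)
  obtain ⟨v, hv, hve⟩ : ∃ v ∈ Ioo a b, |v - e| = δ := by
    rcases he with rfl | rfl
    · exact ⟨e + δ, ⟨by linarith, by linarith⟩, by simp [abs_of_pos hδ]⟩
    · exact ⟨e - δ, ⟨by linarith, by linarith⟩, by simp [abs_of_pos hδ]⟩
  obtain ⟨t, ht0, htv, ht⟩ := exists_pos_lt_two_mul_sin_inv_sub_cos_inv_eq (parabola_pos hv)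
  obtain ⟨z, hz, rfl⟩ : t ∈ parabola a b '' uIcc e v :=
    intermediate_value_uIcc (continuous_parabola a b).continuousOn
      (by rw [parabola_endpoint he]; exact mem_uIcc_of_le ht0.le htv.le)
  have hze : |z - e| ≤ δ := hve ▸ abs_sub_left_of_mem_uIcc hz
  have heab : e ∈ Icc a b := by rcases he with rfl | rfl <;> simp [hab.le]
  have hzab := uIcc_subset_Icc heab (Ioo_subset_Icc_self hv) hz
  have hza : z ≠ a := fun h => ht0.ne' (h ▸ parabola_endpoint (.inl rfl))
  have hzb : z ≠ b := fun h => ht0.ne' (h ▸ parabola_endpoint (.inr rfl))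
  refine ⟨z, ⟨lt_of_le_of_ne hzab.1 (Ne.symm hza), lt_of_le_of_ne hzab.2 hzb⟩,
    hze.trans_lt hδε, ht, ?_⟩
  rw [abs_div, abs_of_pos (sub_pos.2 hab), le_div_iff₀ (sub_pos.2 hab)]
  have hze' := abs_le.1 hze
  rcases he with rfl | rfl
  · linarith [le_abs_self (e + b - 2 * z)]
  · linarith [neg_le_abs (a + e - 2 * z)]

end Parabola

/-- `sSup (W ∩ Iic y)` and `sInf (W ∩ Ici y)` are the endpoints of the gap of `W` containing `y`
(both equal to `y` if `y ∈ W`). -/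
noncomputable def gapParabola (W : Set ℝ) (y : ℝ) : ℝ :=
  parabola (sSup (W ∩ Iic y)) (sInf (W ∩ Ici y)) y

noncomputable def gapWiggle (W : Set ℝ) (y : ℝ) : ℝ := sqMulSinInv (gapParabola W y)

section Gaps

variable {W : Set ℝ} {a b x y : ℝ}

lemma csSup_inter_Iic_of_mem (hy : y ∈ W) : sSup (W ∩ Iic y) = y :=
  IsGreatest.csSup_eq ⟨⟨hy, self_mem_Iic⟩, fun _ hw => hw.2⟩

lemma csInf_inter_Ici_of_mem (hy : y ∈ W) : sInf (W ∩ Ici y) = y :=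
  IsLeast.csInf_eq ⟨⟨hy, self_mem_Ici⟩, fun _ hw => hw.2⟩

lemma csSup_inter_Iic_of_gap (ha : a ∈ W) (hgap : Disjoint (Ioo a b) W) (hy : y ∈ Ioo a b) :
    sSup (W ∩ Iic y) = a :=
  IsGreatest.csSup_eq ⟨⟨ha, hy.1.le⟩, fun _ ⟨hw, hwy⟩ =>
    not_lt.1 fun haw => disjoint_left.1 hgap ⟨haw, hwy.trans_lt hy.2⟩ hw⟩

lemma csInf_inter_Ici_of_gap (hb : b ∈ W) (hgap : Disjoint (Ioo a b) W) (hy : y ∈ Ioo a b) :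
    sInf (W ∩ Ici y) = b :=
  IsLeast.csInf_eq ⟨⟨hb, hy.2.le⟩, fun _ ⟨hw, hyw⟩ =>
    not_lt.1 fun hwb => disjoint_left.1 hgap ⟨hy.1.trans_le hyw, hwb⟩ hw⟩

lemma exists_gap (hW : IsClosed W) (hbelow : ¬BddBelow W) (habove : ¬BddAbove W) (hy : y ∉ W) :
    ∃ a ∈ W, ∃ b ∈ W, y ∈ Ioo a b ∧ Disjoint (Ioo a b) W := by
  obtain ⟨a', ha', ha'y⟩ := not_bddBelow_iff.1 hbelow y
  obtain ⟨b', hb', hyb'⟩ := not_bddAbove_iff.1 habove y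
  have hbdd : BddAbove (W ∩ Iic y) := ⟨y, fun _ hw => hw.2⟩
  have hbdd' : BddBelow (W ∩ Ici y) := ⟨y, fun _ hw => hw.2⟩
  obtain ⟨haW, hay⟩ := (hW.inter isClosed_Iic).csSup_mem ⟨a', ha', ha'y.le⟩ hbdd
  obtain ⟨hbW, hyb⟩ := (hW.inter isClosed_Ici).csInf_mem ⟨b', hb', hyb'.le⟩ hbdd'
  refine ⟨_, haW, _, hbW, ⟨hay.lt_of_ne (ne_of_mem_of_not_mem haW hy),
    hyb.lt_of_ne (ne_of_mem_of_not_mem hbW hy).symm⟩, disjoint_left.2 fun w hw hwW => ?_⟩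
  rcases le_total w y with hwy | hyw
  · exact not_lt.2 (le_csSup hbdd ⟨hwW, hwy⟩) hw.1
  · exact not_lt.2 (csInf_le hbdd' ⟨hwW, hyw⟩) hw.2

lemma exists_gap_endpoint_near (hx : x ∈ W) (hgap : Disjoint (Ioo a b) W) (hy : y ∈ Ioo a b) :
    ∃ e, (e = a ∨ e = b) ∧ |e - x| ≤ |y - x| := by
  rcases le_total x y with hxy | hyx
  · have hxa : x ≤ a := not_lt.1 fun hax => disjoint_left.1 hgap ⟨hax, hxy.trans_lt hy.2⟩ hx
    refine ⟨a, .inl rfl, ?_⟩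
    rw [abs_of_nonneg (sub_nonneg.2 hxa), abs_of_nonneg (sub_nonneg.2 hxy)]
    linarith [hy.1]
  · have hbx : b ≤ x := not_lt.1 fun hxb => disjoint_left.1 hgap ⟨hy.1.trans_le hyx, hxb⟩ hx
    refine ⟨b, .inr rfl, ?_⟩
    rw [abs_of_nonpos (sub_nonpos.2 hbx), abs_of_nonpos (sub_nonpos.2 hyx)]
    linarith [hy.2]

lemma gapParabola_of_mem (hy : y ∈ W) : gapParabola W y = 0 := by
  simp [gapParabola, parabola, csSup_inter_Iic_of_mem hy, csInf_inter_Ici_of_mem hy]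

lemma eqOn_gapParabola (ha : a ∈ W) (hb : b ∈ W) (hgap : Disjoint (Ioo a b) W) :
    EqOn (gapParabola W) (parabola a b) (Ioo a b) := fun y hy => by
  rw [gapParabola, csSup_inter_Iic_of_gap ha hgap hy, csInf_inter_Ici_of_gap hb hgap hy]

lemma abs_gapParabola_le (hbelow : ¬BddBelow W) (habove : ¬BddAbove W) (hx : x ∈ W) (y : ℝ) :
    |gapParabola W y| ≤ |y - x| := by
  have hbdd : BddAbove (W ∩ Iic y) := ⟨y, fun _ hw => hw.2⟩
  have hbdd' : BddBelow (W ∩ Ici y) := ⟨y, fun _ hw => hw.2⟩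
  obtain ⟨a', ha', ha'y⟩ := not_bddBelow_iff.1 hbelow y
  obtain ⟨b', hb', hyb'⟩ := not_bddAbove_iff.1 habove y
  have hay : sSup (W ∩ Iic y) ≤ y := csSup_le ⟨a', ha', ha'y.le⟩ fun _ hw => hw.2
  have hyb : y ≤ sInf (W ∩ Ici y) := le_csInf ⟨b', hb', hyb'.le⟩ fun _ hw => hw.2
  rw [gapParabola, abs_of_nonneg (parabola_nonneg hay hyb)]
  rcases le_total x y with hxy | hyx
  · have := le_csSup hbdd ⟨hx, hxy⟩
    linarith [parabola_le_sub_left hay hyb, le_abs_self (y - x)]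
  · have := csInf_le hbdd' ⟨hx, hyx⟩
    linarith [parabola_le_sub_right hay hyb, neg_abs_le (y - x)]

lemma hasDerivAt_gapWiggle_of_mem (hbelow : ¬BddBelow W) (habove : ¬BddAbove W) (hx : x ∈ W) :
    HasDerivAt (gapWiggle W) 0 x :=
  hasDerivAt_zero_of_abs_le_sq fun y => (abs_sqMulSinInv_le _).trans <| by
    simpa only [sq_abs] using
      pow_le_pow_left₀ (abs_nonneg _) (abs_gapParabola_le hbelow habove hx y) 2

lemma hasDerivAt_gapWiggle_of_gap (ha : a ∈ W) (hb : b ∈ W) (hgap : Disjoint (Ioo a b) W)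
    (hy : y ∈ Ioo a b) :
    HasDerivAt (gapWiggle W) ((2 * parabola a b y * sin (parabola a b y)⁻¹ -
      cos (parabola a b y)⁻¹) * ((a + b - 2 * y) / (b - a))) y :=
  ((hasDerivAt_sqMulSinInv (parabola_pos hy).ne').comp y
    (hasDerivAt_parabola a b y)).congr_of_eventuallyEq <|
      ((eqOn_gapParabola ha hb hgap).eventuallyEq_of_mem (isOpen_Ioo.mem_nhds hy)).fun_comp _

lemma differentiable_gapWiggle (hW : IsClosed W) (hbelow : ¬BddBelow W) (habove : ¬BddAbove W) :
    Differentiable ℝ (gapWiggle W) := fun y => by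
  by_cases hy : y ∈ W
  · exact (hasDerivAt_gapWiggle_of_mem hbelow habove hy).differentiableAt
  · obtain ⟨a, ha, b, hb, hyab, hgap⟩ := exists_gap hW hbelow habove hy
    exact (hasDerivAt_gapWiggle_of_gap ha hb hgap hyab).differentiableAt

lemma exists_abs_deriv_gapWiggle_ge {e ε : ℝ} (ha : a ∈ W) (hb : b ∈ W) (hab : a < b)
    (hgap : Disjoint (Ioo a b) W) (he : e = a ∨ e = b) (hε : 0 < ε) :
    ∃ z, |z - e| < ε ∧ 1 / 2 ≤ |deriv (gapWiggle W) z| := by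
  obtain ⟨z, hz, hze, hwiggle, hslope⟩ := exists_parabola_near_endpoint hab he hε
  refine ⟨z, hze, ?_⟩
  rwa [(hasDerivAt_gapWiggle_of_gap ha hb hgap hz).deriv, hwiggle, neg_one_mul, abs_neg]

lemma not_continuousAt_deriv_gapWiggle (hW : IsClosed W) (hbelow : ¬BddBelow W)
    (habove : ¬BddAbove W) (hx : x ∈ W) (hxint : x ∉ interior W) :
    ¬ContinuousAt (deriv (gapWiggle W)) x := by
  intro hcont
  obtain ⟨r, hr, hsmall⟩ := Metric.continuousAt_iff.1 hcont (1 / 2) one_half_pos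
  have hxW : x ∈ closure Wᶜ := by rwa [closure_compl]
  obtain ⟨y, hyW, hxy⟩ := Metric.mem_closure_iff.1 hxW (r / 2) (half_pos hr)
  obtain ⟨a, ha, b, hb, hyab, hgap⟩ := exists_gap hW hbelow habove hyW
  obtain ⟨e, he, hex⟩ := exists_gap_endpoint_near hx hgap hyab
  obtain ⟨z, hze, hz⟩ :=
    exists_abs_deriv_gapWiggle_ge ha hb (hyab.1.trans hyab.2) hgap he (half_pos hr)
  have hzx : dist z x < r := by
    rw [dist_comm, Real.dist_eq] at hxy
    rw [Real.dist_eq]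
    linarith [abs_sub_le z e x]
  have hfz := hsmall hzx
  rw [Real.dist_eq, (hasDerivAt_gapWiggle_of_mem hbelow habove hx).deriv, sub_zero] at hfz
  linarith

end Gaps

theorem stmt_9 (V : Set ℝ) (hV : IsClosed V) :
    ∃ f : ℝ → ℝ, Differentiable ℝ f ∧
      ∀ x ∈ V \ interior V, ¬ ContinuousAt (deriv f) x := by
  set W := V ∪ range ((↑) : ℤ → ℝ)
  have hW : IsClosed W := hV.union Real.isClosed_range_intCast
  have hZbelow : ¬BddBelow (range ((↑) : ℤ → ℝ)) := not_bddBelow_iff.2 fun x =>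
    let ⟨n, hn⟩ := exists_int_lt x; ⟨n, mem_range_self n, hn⟩
  have hZabove : ¬BddAbove (range ((↑) : ℤ → ℝ)) := not_bddAbove_iff.2 fun x =>
    let ⟨n, hn⟩ := exists_int_gt x; ⟨n, mem_range_self n, hn⟩
  have hbelow : ¬BddBelow W := fun h => hZbelow (h.mono subset_union_right)
  have habove : ¬BddAbove W := fun h => hZabove (h.mono subset_union_right)
  have hint : interior W = interior V := interior_union_isClosed_of_interior_empty hV
    (interior_eq_empty_iff_dense_compl.2 ((countable_range _).dense_compl ℝ))
  refine ⟨gapWiggle W, differentiable_gapWiggle hW hbelow habove, fun x hx => ?_⟩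
  exact not_continuousAt_deriv_gapWiggle hW hbelow habove (subset_union_left hx.1) (hint ▸ hx.2)
end

section
/- Let g : ℝ → ℝ be differentiable with g(x) = 0 for all x ∉ (0, 1), and suppose there is a constant C > 0 with |g(z)| ≤ C · min(z, 1 − z) for all z ∈ [0, 1]. Let (qₙ)ₙ and (rₙ)ₙ be real sequences with qₙ < rₙ for all n and with the open intervals (qₙ, rₙ) pairwise disjoint. Define fₙ : ℝ → ℝ by fₙ(x) = 2⁻ⁿ · (rₙ − qₙ) · g((x − qₙ)/(rₙ − qₙ)), and define f : ℝ → ℝ by f(x) = Σₙ fₙ(x) (for each x at most one summand is nonzero, so the sum is well defined). Then f is differentiable at every point of ℝ; moreover f′(x) = 2⁻ⁿ · g′((x − qₙ)/(rₙ − qₙ)) for x ∈ (qₙ, rₙ), and f′(x) = 0 for every x not belonging to any interval (qₙ, rₙ). -/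
/-!
Each summand `fₙ` is a copy of `g` rescaled to `(qₙ, rₙ)` and damped by `2⁻ⁿ`, so on its
interval `f = fₙ` and the chain rule gives `f'`. At a point `x` outside every interval, every
`fₙ` has derivative `0` there (`g'` vanishes off `(0, 1)`), and the bound on `g` gives
`|fₙ y| ≤ 2⁻ⁿ C |y - x|` on `(qₙ, rₙ)`. Since at most one summand is nonzero at `y`, the finitely
many `n` with `2⁻ⁿ C ≥ ε` are handled by their own derivatives and the others by this bound,
so `f y = o(y - x)`.
-/

open Set Function Filter Topology Asymptotics

theorem deriv_eq_zero_of_forall_notMem_Ioo {g : ℝ → ℝ} {a b z : ℝ} (hg : DifferentiableAt ℝ g z)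
    (hg0 : ∀ x ∉ Ioo a b, g x = 0) (hz : z ∉ Ioo a b) : deriv g z = 0 := by
  have key : ∀ s, UniqueDiffWithinAt ℝ s z → z ∈ s → s ⊆ (Ioo a b)ᶜ → deriv g z = 0 :=
    fun s hs hzs hsub => hs.eq_deriv s hg.hasDerivAt.hasDerivWithinAt <|
      (hasDerivWithinAt_const z s 0).congr (fun y hy => hg0 y (hsub hy)) (hg0 z hz)
  rw [mem_Ioo, not_and_or, not_lt, not_lt] at hz
  rcases hz with hz | hz
  · exact key _ (uniqueDiffWithinAt_Iic z) (mem_Iic.2 le_rfl)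
      fun _ hy h => (h.1.trans_le hy).not_ge hz
  · exact key _ (uniqueDiffWithinAt_Ici z) (mem_Ici.2 le_rfl)
      fun _ hy h => (h.2.trans_le' hy).not_ge hz

theorem min_sub_le_abs_sub_of_notMem_Ioo {a b x y : ℝ} (hx : x ∉ Ioo a b) :
    min (y - a) (b - y) ≤ |y - x| := by
  rw [mem_Ioo, not_and_or, not_lt, not_lt] at hx
  rcases hx with hx | hx
  · exact (min_le_left _ _).trans ((by linarith : y - a ≤ y - x).trans (le_abs_self _))
  · exact (min_le_right _ _).trans ((by linarith : b - y ≤ -(y - x)).trans (neg_le_abs _))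

/-- With `c = 2⁻ⁿ`, `a = qₙ`, `b = rₙ` this is the paper's `fₙ`. -/
noncomputable def rescaledBump (g : ℝ → ℝ) (c a b x : ℝ) : ℝ :=
  c * (b - a) * g ((x - a) / (b - a))

section rescaledBump

variable {g : ℝ → ℝ} {a b c x : ℝ}

theorem div_sub_mem_Ioo_iff (hab : a < b) : (x - a) / (b - a) ∈ Ioo (0 : ℝ) 1 ↔ x ∈ Ioo a b := by
  rw [mem_Ioo, mem_Ioo, lt_div_iff₀ (sub_pos.2 hab), zero_mul, div_lt_one (sub_pos.2 hab),
    sub_pos, sub_lt_sub_iff_right]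

theorem rescaledBump_eq_zero (hg0 : ∀ z ∉ Ioo (0 : ℝ) 1, g z = 0) (hab : a < b)
    (hx : x ∉ Ioo a b) : rescaledBump g c a b x = 0 := by
  rw [rescaledBump, hg0 _ (mt (div_sub_mem_Ioo_iff hab).1 hx), mul_zero]

theorem hasDerivAt_rescaledBump (hg : DifferentiableAt ℝ g ((x - a) / (b - a))) (hab : a ≠ b) :
    HasDerivAt (rescaledBump g c a b) (c * deriv g ((x - a) / (b - a))) x := by
  have hba : b - a ≠ 0 := sub_ne_zero.2 hab.symm
  have hlin : HasDerivAt (fun y => (y - a) / (b - a)) (1 / (b - a)) x :=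
    ((hasDerivAt_id x).sub_const a).div_const (b - a)
  exact ((hg.hasDerivAt.comp x hlin).const_mul (c * (b - a))).congr_deriv (by field_simp)

theorem abs_rescaledBump_le {C y : ℝ} (hbound : ∀ z ∈ Icc (0 : ℝ) 1, |g z| ≤ C * min z (1 - z))
    (hc : 0 ≤ c) (hab : a < b) (hx : x ∉ Ioo a b) (hy : y ∈ Ioo a b) :
    |rescaledBump g c a b y| ≤ c * C * |y - x| := by
  set z := (y - a) / (b - a) with hz_def
  have hba : 0 < b - a := sub_pos.2 hab
  have hz : z ∈ Ioo (0 : ℝ) 1 := (div_sub_mem_Ioo_iff hab).2 hy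
  have hgz := hbound z (Ioo_subset_Icc_self hz)
  have hmin : 0 < min z (1 - z) := lt_min hz.1 (sub_pos.2 hz.2)
  have hC : 0 ≤ C := nonneg_of_mul_nonneg_left ((abs_nonneg _).trans hgz) hmin
  have hmin_eq : (b - a) * min z (1 - z) = min (y - a) (b - y) := by
    rw [mul_min_of_nonneg _ _ hba.le, mul_one_sub, hz_def, mul_div_cancel₀ _ hba.ne',
      sub_sub_sub_cancel_right]
  calc |rescaledBump g c a b y| = c * ((b - a) * |g z|) := by
        rw [rescaledBump, abs_mul, abs_mul, abs_of_nonneg hc, abs_of_pos hba, mul_assoc]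
    _ ≤ c * ((b - a) * (C * min z (1 - z))) := by gcongr
    _ = c * C * min (y - a) (b - y) := by rw [← hmin_eq]; ring
    _ ≤ c * C * |y - x| := by gcongr; exact min_sub_le_abs_sub_of_notMem_Ioo hx

end rescaledBump

section DisjointSupports

variable {ι : Type*}

theorem tsum_eq_of_mem_of_pairwise_disjoint {α : Type*} {F : ι → α → ℝ} {s : ι → Set α}
    (hdisj : Pairwise (Disjoint on s))
    (hsupp : ∀ n, ∀ y ∉ s n, F n y = 0) {n : ι} {y : α} (hy : y ∈ s n) :
    ∑' m, F m y = F n y :=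
  tsum_eq_single n fun m hm => hsupp m y (disjoint_right.1 (hdisj hm) hy)

theorem abs_tsum_le_of_pairwise_disjoint {α : Type*} {F : ι → α → ℝ} {s : ι → Set α}
    (hdisj : Pairwise (Disjoint on s))
    (hsupp : ∀ n, ∀ y ∉ s n, F n y = 0) {y : α} {B : ℝ} (hB : 0 ≤ B)
    (h : ∀ n, y ∈ s n → |F n y| ≤ B) : |∑' n, F n y| ≤ B := by
  by_cases hy : ∃ n, y ∈ s n
  · obtain ⟨n, hn⟩ := hy
    rw [tsum_eq_of_mem_of_pairwise_disjoint hdisj hsupp hn]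
    exact h n hn
  · simp only [not_exists] at hy
    simpa [hsupp _ y (hy _)] using hB

theorem hasDerivAt_tsum_of_mem_of_pairwise_disjoint {F : ι → ℝ → ℝ} {s : ι → Set ℝ}
    (hdisj : Pairwise (Disjoint on s)) (hsupp : ∀ n, ∀ y ∉ s n, F n y = 0) {n : ι} {f' x : ℝ}
    (hF : HasDerivAt (F n) f' x) (hs : IsOpen (s n)) (hx : x ∈ s n) :
    HasDerivAt (fun y => ∑' m, F m y) f' x :=
  hF.congr_of_eventuallyEq <| eventually_of_mem (hs.mem_nhds hx) fun _ hy =>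
    tsum_eq_of_mem_of_pairwise_disjoint hdisj hsupp hy

theorem hasDerivAt_tsum_zero_of_pairwise_disjoint {F : ℕ → ℝ → ℝ} {s : ℕ → Set ℝ} {c : ℕ → ℝ}
    {x : ℝ} (hdisj : Pairwise (Disjoint on s)) (hsupp : ∀ n, ∀ y ∉ s n, F n y = 0)
    (hx : ∀ n, x ∉ s n) (hF : ∀ n, HasDerivAt (F n) 0 x) (hc : Tendsto c atTop (𝓝 0))
    (hbound : ∀ n, ∀ y ∈ s n, |F n y| ≤ c n * |y - x|) :
    HasDerivAt (fun y => ∑' n, F n y) 0 x := by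
  have hflat : ∀ {G : ℝ → ℝ}, G x = 0 → (HasDerivAt G 0 x ↔ G =o[𝓝 x] fun y => y - x) :=
    fun hG => by simp only [hasDerivAt_iff_isLittleO, hG, smul_zero, sub_zero]
  rw [hflat (by simp [hsupp _ x (hx _)]), isLittleO_iff]
  intro ε hε
  obtain ⟨N, hN⟩ := eventually_atTop.1 (hc.eventually (ge_mem_nhds hε))
  have hsmall : ∀ᶠ y in 𝓝 x, ∀ n ∈ Finset.range N, |F n y| ≤ ε * |y - x| :=
    (eventually_all_finset _).2 fun n _ => by
      simpa only [Real.norm_eq_abs] using ((hflat (hsupp n x (hx n))).1 (hF n)).def hε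
  filter_upwards [hsmall] with y hy
  rw [Real.norm_eq_abs, Real.norm_eq_abs]
  refine abs_tsum_le_of_pairwise_disjoint hdisj hsupp (by positivity) fun n hn => ?_
  rcases lt_or_ge n N with hnN | hnN
  · exact hy n (Finset.mem_range.2 hnN)
  · exact (hbound n y hn).trans (by gcongr; exact hN n hnN)

end DisjointSupports

theorem stmt_13_general (g : ℝ → ℝ) (hg : Differentiable ℝ g)
    (hg0 : ∀ x : ℝ, x ∉ Ioo (0 : ℝ) 1 → g x = 0)
    (C : ℝ)
    (hbound : ∀ z ∈ Icc (0 : ℝ) 1, |g z| ≤ C * min z (1 - z))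
    (q r : ℕ → ℝ) (hqr : ∀ n, q n < r n)
    (hdisj : ∀ m n, m ≠ n → Disjoint (Ioo (q m) (r m)) (Ioo (q n) (r n)))
    (f : ℝ → ℝ)
    (hf : ∀ x : ℝ,
      f x = ∑' n : ℕ, ((2 : ℝ) ^ n)⁻¹ * (r n - q n) * g ((x - q n) / (r n - q n))) :
    Differentiable ℝ f ∧
    (∀ n : ℕ, ∀ x ∈ Ioo (q n) (r n),
      deriv f x = ((2 : ℝ) ^ n)⁻¹ * deriv g ((x - q n) / (r n - q n))) ∧
    (∀ x : ℝ, (∀ n : ℕ, x ∉ Ioo (q n) (r n)) → deriv f x = 0) := by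
  set F : ℕ → ℝ → ℝ := fun n => rescaledBump g ((2 : ℝ) ^ n)⁻¹ (q n) (r n)
  have hfF : f = fun x => ∑' n, F n x := funext hf
  have hsupp : ∀ n, ∀ x ∉ Ioo (q n) (r n), F n x = 0 :=
    fun n _ => rescaledBump_eq_zero hg0 (hqr n)
  have hF : ∀ n x, HasDerivAt (F n) (((2 : ℝ) ^ n)⁻¹ * deriv g ((x - q n) / (r n - q n))) x :=
    fun n _ => hasDerivAt_rescaledBump (hg _) (hqr n).ne
  have hin : ∀ n, ∀ x ∈ Ioo (q n) (r n),
      HasDerivAt f (((2 : ℝ) ^ n)⁻¹ * deriv g ((x - q n) / (r n - q n))) x :=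
    fun n x hx =>
      hfF ▸ hasDerivAt_tsum_of_mem_of_pairwise_disjoint hdisj hsupp (hF n x) isOpen_Ioo hx
  have hout : ∀ x, (∀ n, x ∉ Ioo (q n) (r n)) → HasDerivAt f 0 x := by
    intro x hx
    refine hfF ▸ hasDerivAt_tsum_zero_of_pairwise_disjoint (c := fun n => ((2 : ℝ) ^ n)⁻¹ * C)
      hdisj hsupp hx (fun n => ?_) ?_ fun n y hy => abs_rescaledBump_le hbound (by positivity)
        (hqr n) (hx n) hy
    · simpa [deriv_eq_zero_of_forall_notMem_Ioo (hg _) hg0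
        (mt (div_sub_mem_Ioo_iff (hqr n)).1 (hx n))] using hF n x
    · simpa using (tendsto_inv_atTop_zero.comp (tendsto_pow_atTop_atTop_of_one_lt
        one_lt_two)).mul_const C
  refine ⟨fun x => ?_, fun n x hx => (hin n x hx).deriv, fun x hx => (hout x hx).deriv⟩
  by_cases hx : ∃ n, x ∈ Ioo (q n) (r n)
  · obtain ⟨n, hn⟩ := hx
    exact (hin n x hn).differentiableAt
  · exact (hout x (not_exists.1 hx)).differentiableAt

theorem stmt_13 (g : ℝ → ℝ) (hg : Differentiable ℝ g)
    (hg0 : ∀ x : ℝ, x ∉ Ioo (0 : ℝ) 1 → g x = 0)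
    (C : ℝ) (hC : 0 < C)
    (hbound : ∀ z ∈ Icc (0 : ℝ) 1, |g z| ≤ C * min z (1 - z))
    (q r : ℕ → ℝ) (hqr : ∀ n, q n < r n)
    (hdisj : ∀ m n, m ≠ n → Disjoint (Ioo (q m) (r m)) (Ioo (q n) (r n)))
    (f : ℝ → ℝ)
    (hf : ∀ x : ℝ,
      f x = ∑' n : ℕ, ((2 : ℝ) ^ n)⁻¹ * (r n - q n) * g ((x - q n) / (r n - q n))) :
    Differentiable ℝ f ∧
    (∀ n : ℕ, ∀ x ∈ Ioo (q n) (r n),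
      deriv f x = ((2 : ℝ) ^ n)⁻¹ * deriv g ((x - q n) / (r n - q n))) ∧
    (∀ x : ℝ, (∀ n : ℕ, x ∉ Ioo (q n) (r n)) → deriv f x = 0) :=
  stmt_13_general g hg hg0 C hbound q r hqr hdisj f hf
end
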